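/- Let α and α' be types, r : α → α → Prop and r' : α' → α' → Prop transitive binary relations, y : α with r y y, y' : α' with r' y' y', and P : α → Prop, Q : α' → Prop predicates. Then ((¬ ∀̃ ỹ ⊴ y, P ỹ) ∧ (¬ ∀̃ ỹ' ⊴ y', Q ỹ')) ↔ ¬ (∀̃ ŷ ⊴ y, ∀̃ ŷ' ⊴ y', ((∀̃ ỹ ⊴ ŷ, P ỹ) ∨ (∀̃ ỹ' ⊴ ŷ', Q ỹ'))), where quantifiers over α use r and quantifiers over α' use r'. (This is the conjunction case of Step 1 in the factorization proof, arising when ∧ is taken as a primitive symbol; the left-to-right direction instantiates ŷ := y and ŷ' := y' using the self-majorizability hypotheses, and the right-to-left direction uses transitivity of r and r'.) -/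
import Mathlib


theorem stmt_7 (α α' : Type*) (r : α → α → Prop) (r' : α' → α' → Prop)
    (hr : Transitive r) (hr' : Transitive r')
    (y : α) (hy : r y y) (y' : α') (hy' : r' y' y')
    (P : α → Prop) (Q : α' → Prop) :
    ((¬ ∀ yt, r yt y → r yt yt → P yt) ∧ (¬ ∀ yt', r' yt' y' → r' yt' yt' → Q yt')) ↔
      ¬ (∀ yh, r yh y → r yh yh → ∀ yh', r' yh' y' → r' yh' yh' →
          ((∀ yt, r yt yh → r yt yt → P yt) ∨ (∀ yt', r' yt' yh' → r' yt' yt' → Q yt'))) := by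
  constructor
  · rintro ⟨h1, h2⟩ H
    rcases H y hy hy y' hy' hy' with h | h
    · exact h1 h
    · exact h2 h
  · intro H
    constructor
    · intro hP
      exact H fun yh hyh hyhh yh' _ _ => Or.inl fun yt hyt hytt => hP yt (hr hyt hyh) hytt
    · intro hQ
      exact H fun yh _ _ yh' hyh' _ => Or.inr fun yt' hyt' hytt' => hQ yt' (hr' hyt' hyh') hytt'
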